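/- Suppose that (G,m) is a ℤ²⋊Cs-tight gain graph that has a vertex v₀ of degree 3 whose three incident edges e₁,e₂,e₃ are parallel non-loop edges joining v₀ to a single neighbour v₁ (all oriented from v₀ to v₁). Then there exist distinct indices i,j∈{1,2,3} such that the gain graph obtained from (G,m) by deleting v₀ with its incident edges and adding the loop (v₁,v₁;m(e_i)⁻¹m(e_j)) is ℤ²⋊Cs-tight. -/

import Mathlib

namespace Crystal

/-- The wallpaper group `pm = ℤ² ⋊ 𝒞ₛ`.  An element is a pair of a translation
vector `t ∈ ℤ²` and a Boolean `r` recording the `𝒞ₛ`-component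
(`true` = the reflection `s` in the x-axis). -/
@[ext] structure PM : Type where
  t : ℤ × ℤ
  r : Bool

namespace PM

/-- The action of the reflection component on translation vectors. -/
def act (σ : Bool) (z : ℤ × ℤ) : ℤ × ℤ := (z.1, if σ then -z.2 else z.2)

instance : Mul PM := ⟨fun a b => ⟨a.t + act a.r b.t, xor a.r b.r⟩⟩
instance : One PM := ⟨⟨0, false⟩⟩
instance : Inv PM := ⟨fun a => ⟨act a.r (-a.t), a.r⟩⟩

lemma mul_def (a b : PM) : a * b = ⟨a.t + act a.r b.t, xor a.r b.r⟩ := rfl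
lemma one_def : (1 : PM) = ⟨0, false⟩ := rfl
lemma inv_def (a : PM) : a⁻¹ = ⟨act a.r (-a.t), a.r⟩ := rfl

instance : Group PM where
  mul_assoc a b c := by
    obtain ⟨⟨x1, x2⟩, ra⟩ := a
    obtain ⟨⟨y1, y2⟩, rb⟩ := b
    obtain ⟨⟨z1, z2⟩, rc⟩ := c
    cases ra <;> cases rb <;> cases rc <;>
      simp [mul_def, act, Prod.ext_iff] <;> omega
  one_mul a := by
    obtain ⟨⟨x1, x2⟩, ra⟩ := a
    cases ra <;> simp [mul_def, one_def, act]
  mul_one a := by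
    obtain ⟨⟨x1, x2⟩, ra⟩ := a
    cases ra <;> simp [mul_def, one_def, act]
  inv_mul_cancel a := by
    obtain ⟨⟨x1, x2⟩, ra⟩ := a
    cases ra <;> simp [mul_def, one_def, inv_def, act, Prod.ext_iff]

/-- The affine action of `pm` on the plane: `(z,σ)·x = σ(x) + z`. -/
noncomputable def toPlane (g : PM) (x : ℝ × ℝ) : ℝ × ℝ :=
  (x.1 + (g.t.1 : ℝ), (if g.r then -x.2 else x.2) + (g.t.2 : ℝ))

end PM

/-- A multigraph: a finite vertex set, a finite edge set, and two endpoint maps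
(which also fix a reference orientation of every edge, from `fst` to `snd`).
Loops and parallel edges are allowed. -/
structure Multigraph (α β : Type) where
  verts : Finset α
  edges : Finset β
  fst : β → α
  snd : β → α
  fst_mem : ∀ e ∈ edges, fst e ∈ verts
  snd_mem : ∀ e ∈ edges, snd e ∈ verts

variable {α β : Type}

/-- `H` is a subgraph of `G`. -/
def IsSubgraph (H G : Multigraph α β) : Prop :=
  H.verts ⊆ G.verts ∧ H.edges ⊆ G.edges ∧
    ∀ e ∈ H.edges, H.fst e = G.fst e ∧ H.snd e = G.snd e

/-- `(k,l)`-sparsity. -/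
def Sparse (k l : ℕ) (G : Multigraph α β) : Prop :=
  ∀ H : Multigraph α β, IsSubgraph H G → 1 ≤ H.edges.card →
    (H.edges.card : ℤ) ≤ k * H.verts.card - l

/-- `(k,l)`-tightness. -/
def Tight (k l : ℕ) (G : Multigraph α β) : Prop :=
  Sparse k l G ∧ (G.edges.card : ℤ) = k * G.verts.card - l

/-- The degree of a vertex: the number of edge-incidences, loops counting twice. -/
def Multigraph.degree [DecidableEq α] (G : Multigraph α β) (v : α) : ℕ :=
  ∑ e ∈ G.edges, ((if G.fst e = v then 1 else 0) + (if G.snd e = v then 1 else 0))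

/-- The starting vertex of a step `(e, dir)` of a walk: `dir = true` means the
edge is traversed forwards. -/
def stepHead (G : Multigraph α β) (s : β × Bool) : α := if s.2 then G.fst s.1 else G.snd s.1

/-- The final vertex of a step of a walk. -/
def stepTail (G : Multigraph α β) (s : β × Bool) : α := if s.2 then G.snd s.1 else G.fst s.1

/-- `IsWalk G u v L` : `L` is a walk in `G` from `u` to `v`. -/
def IsWalk (G : Multigraph α β) : α → α → List (β × Bool) → Prop
  | u, v, [] => u = v
  | u, v, s :: L => s.1 ∈ G.edges ∧ stepHead G s = u ∧ IsWalk G (stepTail G s) v L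

/-- The net gain of a walk. -/
def walkGain (m : β → PM) (L : List (β × Bool)) : PM :=
  (L.map fun s => if s.2 then m s.1 else (m s.1)⁻¹).prod

/-- A gain graph is balanced if every closed walk has identity net gain. -/
def Balanced (G : Multigraph α β) (m : β → PM) : Prop :=
  ∀ u L, IsWalk G u u L → walkGain m L = 1

/-- A gain graph is purely periodic if every closed walk has net gain in the
translation subgroup `ℤ²`. -/
def PurelyPeriodic (G : Multigraph α β) (m : β → PM) : Prop :=
  ∀ u L, IsWalk G u u L → (walkGain m L).r = false

/-- A multigraph is connected if every pair of its vertices is joined by a walk. -/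
def Connected (G : Multigraph α β) : Prop :=
  ∀ u ∈ G.verts, ∀ v ∈ G.verts, ∃ L, IsWalk G u v L

/-- The conditions for `m` to be a gain assignment on `G`: parallel edges with the
same orientation get distinct gains, and loops get non-identity gains. -/
structure IsGainGraph (G : Multigraph α β) (m : β → PM) : Prop where
  parallel_ne : ∀ e ∈ G.edges, ∀ f ∈ G.edges,
    e ≠ f → G.fst e = G.fst f → G.snd e = G.snd f → m e ≠ m f
  loop_ne_one : ∀ e ∈ G.edges, G.fst e = G.snd e → m e ≠ 1

/-- `ℤ²⋊𝒞ₛ`-tightness of a gain graph. -/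
def PMTight (G : Multigraph α β) (m : β → PM) : Prop :=
  Tight 2 1 G ∧
    (∀ H : Multigraph α β, IsSubgraph H G → PurelyPeriodic H m → Sparse 2 2 H) ∧
    (∀ H : Multigraph α β, IsSubgraph H G → Balanced H m → Sparse 2 3 H)

/-- The orbit rigidity matrix of a `ℤ²⋊𝒞ₛ`-gain framework. -/
noncomputable def orbitMatrix [DecidableEq α] (G : Multigraph α β) (m : β → PM)
    (p : α → ℝ × ℝ) :
    Matrix {e : β // e ∈ G.edges} ({v : α // v ∈ G.verts} × Fin 2) ℝ :=
  fun er vc =>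
    let e : β := er.1
    let i : α := G.fst e
    let j : α := G.snd e
    let w : α := vc.1.1
    let entry : ℝ × ℝ :=
      if i = j then
        (if w = i then p i + p i - PM.toPlane (m e) (p i) - PM.toPlane (m e)⁻¹ (p i) else 0)
      else if w = i then p i - PM.toPlane (m e) (p j)
      else if w = j then p j - PM.toPlane (m e)⁻¹ (p i)
      else 0
    if vc.2 = 0 then entry.1 else entry.2

/-- A configuration is generic if its orbit rigidity matrix has the maximum
possible rank among all configurations. -/
def Generic [DecidableEq α] (G : Multigraph α β) (m : β → PM) (p : α → ℝ × ℝ) : Prop :=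
  ∀ q : α → ℝ × ℝ, (orbitMatrix G m q).rank ≤ (orbitMatrix G m p).rank

/-- A gain graph is rigid if the orbit rigidity matrix of a generic configuration
has rank `2|V| - 1`. -/
def Rigid [DecidableEq α] (G : Multigraph α β) (m : β → PM) : Prop :=
  ∃ p : α → ℝ × ℝ, Generic G m p ∧
    ((orbitMatrix G m p).rank : ℤ) = 2 * G.verts.card - 1

/-- A gain graph is independent if the rows of the orbit rigidity matrix of a
generic configuration are linearly independent. -/
def Independent [DecidableEq α] (G : Multigraph α β) (m : β → PM) : Prop :=
  ∃ p : α → ℝ × ℝ, Generic G m p ∧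
    LinearIndependent ℝ (fun er => orbitMatrix G m p er)

/-- A gain graph is minimally rigid if it is rigid and independent. -/
def MinimallyRigid [DecidableEq α] (G : Multigraph α β) (m : β → PM) : Prop :=
  Rigid G m ∧ Independent G m

/-- `e` joins `u` and `v` (in one of the two orientations). -/
def Joins (G : Multigraph α β) (e : β) (u v : α) : Prop :=
  (G.fst e = u ∧ G.snd e = v) ∨ (G.fst e = v ∧ G.snd e = u)

/-- The gain of an edge read with `v` as its initial vertex (inverting the gain
if the edge is oriented towards `v`). -/
def gainFrom [DecidableEq α] (G : Multigraph α β) (m : β → PM) (v : α) (e : β) : PM :=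
  if G.fst e = v then m e else (m e)⁻¹

/-- The endpoint of an edge other than `v` (for an edge incident with `v`). -/
def otherEnd [DecidableEq α] (G : Multigraph α β) (v : α) (e : β) : α :=
  if G.fst e = v then G.snd e else G.fst e

/-- Deletion of a vertex together with all edges incident with it. -/
def Multigraph.deleteVertex [DecidableEq α] (G : Multigraph α β) (v : α) :
    Multigraph α β where
  verts := G.verts.erase v
  edges := G.edges.filter fun e => G.fst e ≠ v ∧ G.snd e ≠ v
  fst := G.fst
  snd := G.snd
  fst_mem := fun e he => by
    rw [Finset.mem_filter] at he
    exact Finset.mem_erase.2 ⟨he.2.1, G.fst_mem e he.1⟩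
  snd_mem := fun e he => by
    rw [Finset.mem_filter] at he
    exact Finset.mem_erase.2 ⟨he.2.2, G.snd_mem e he.1⟩

/-- Addition of a new edge `f` from `u` to `v`. -/
def Multigraph.addEdge [DecidableEq α] [DecidableEq β] (G : Multigraph α β)
    (f : β) (u v : α) : Multigraph α β where
  verts := insert u (insert v G.verts)
  edges := insert f G.edges
  fst := Function.update G.fst f u
  snd := Function.update G.snd f v
  fst_mem := fun e he => by
    by_cases hef : e = f
    · subst hef; simp
    · rw [Function.update_of_ne hef]
      have heG : e ∈ G.edges := by
        rcases Finset.mem_insert.1 he with h | h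
        · exact absurd h hef
        · exact h
      exact Finset.mem_insert_of_mem (Finset.mem_insert_of_mem (G.fst_mem e heG))
  snd_mem := fun e he => by
    by_cases hef : e = f
    · subst hef; simp
    · rw [Function.update_of_ne hef]
      have heG : e ∈ G.edges := by
        rcases Finset.mem_insert.1 he with h | h
        · exact absurd h hef
        · exact h
      exact Finset.mem_insert_of_mem (Finset.mem_insert_of_mem (G.snd_mem e heG))

/-- `(G',m')` is obtained from `(G,m)` by a gained 0-extension. -/
def IsZeroExtension [DecidableEq α] [DecidableEq β] (G : Multigraph α β) (m : β → PM)
    (G' : Multigraph α β) (m' : β → PM) : Prop :=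
  ∃ v₀ v₁ v₂ f₁ f₂, v₀ ∉ G.verts ∧ v₁ ∈ G.verts ∧ v₂ ∈ G.verts ∧
    f₁ ∉ G.edges ∧ f₂ ∉ G.edges ∧ f₁ ≠ f₂ ∧
    G'.verts = insert v₀ G.verts ∧ G'.edges = insert f₁ (insert f₂ G.edges) ∧
    (∀ e ∈ G.edges, G'.fst e = G.fst e ∧ G'.snd e = G.snd e ∧ m' e = m e) ∧
    Joins G' f₁ v₀ v₁ ∧ Joins G' f₂ v₀ v₂ ∧
    IsGainGraph G' m'

/-- `(G',m')` is obtained from `(G,m)` by a gained 1-extension. -/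
def IsOneExtension [DecidableEq α] [DecidableEq β] (G : Multigraph α β) (m : β → PM)
    (G' : Multigraph α β) (m' : β → PM) : Prop :=
  ∃ v₀ v₃ e f₁ f₂ f₃, v₀ ∉ G.verts ∧ v₃ ∈ G.verts ∧ e ∈ G.edges ∧
    f₁ ∉ G.edges.erase e ∧ f₂ ∉ G.edges.erase e ∧ f₃ ∉ G.edges.erase e ∧
    f₁ ≠ f₂ ∧ f₁ ≠ f₃ ∧ f₂ ≠ f₃ ∧
    G'.verts = insert v₀ G.verts ∧
    G'.edges = insert f₁ (insert f₂ (insert f₃ (G.edges.erase e))) ∧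
    (∀ e' ∈ G.edges.erase e, G'.fst e' = G.fst e' ∧ G'.snd e' = G.snd e' ∧ m' e' = m e') ∧
    Joins G' f₁ v₀ (G.fst e) ∧ Joins G' f₂ v₀ (G.snd e) ∧ Joins G' f₃ v₀ v₃ ∧
    (gainFrom G' m' v₀ f₁)⁻¹ * gainFrom G' m' v₀ f₂ = m e ∧
    IsGainGraph G' m'

/-- `(G',m')` is obtained from `(G,m)` by a gained loop-1-extension. -/
def IsLoopOneExtension [DecidableEq α] [DecidableEq β] (G : Multigraph α β) (m : β → PM)
    (G' : Multigraph α β) (m' : β → PM) : Prop :=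
  ∃ v₀ v₁ l f, v₀ ∉ G.verts ∧ v₁ ∈ G.verts ∧ l ∉ G.edges ∧ f ∉ G.edges ∧ l ≠ f ∧
    G'.verts = insert v₀ G.verts ∧ G'.edges = insert l (insert f G.edges) ∧
    (∀ e ∈ G.edges, G'.fst e = G.fst e ∧ G'.snd e = G.snd e ∧ m' e = m e) ∧
    G'.fst l = v₀ ∧ G'.snd l = v₀ ∧ (m' l).r = true ∧
    Joins G' f v₀ v₁ ∧ IsGainGraph G' m'

/-- A `ℤ²⋊𝒞ₛ`-tight gain graph on `K₁¹`: a single vertex with a single loop whose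
gain has non-trivial `𝒞ₛ`-component. -/
def IsTightK11 (G : Multigraph α β) (m : β → PM) : Prop :=
  ∃ v l, G.verts = {v} ∧ G.edges = {l} ∧ G.fst l = v ∧ G.snd l = v ∧ (m l).r = true

/-!
If the three parallel gains had equal reflection components, a two-colouring of `{v₀, v₁}`
would make the reflection part of every gain a coboundary, so the three edges would form a
purely periodic subgraph with 3 > 2·2 - 2 edges on two vertices. Hence some `m(eᵢ)⁻¹ m(eⱼ)` is a
reflection, and we give it to the new loop. A subgraph containing that loop is then neither
purely periodic nor balanced, and it lifts to a subgraph of `G` with one more vertex (`v₀`) and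
two more edges (the other two parallel edges), which transfers `(2,1)`-sparsity. Subgraphs
avoiding the loop are subgraphs of `G` with the same gains.
-/

namespace PM

@[simp] lemma r_mul (a b : PM) : (a * b).r = xor a.r b.r := rfl

@[simp] lemma r_inv (a : PM) : a⁻¹.r = a.r := rfl

@[simp] lemma r_one : (1 : PM).r = false := rfl

end PM

lemma IsSubgraph.refl (G : Multigraph α β) : IsSubgraph G G :=
  ⟨subset_rfl, subset_rfl, fun _ _ => ⟨rfl, rfl⟩⟩

lemma IsSubgraph.trans {H K G : Multigraph α β} (hHK : IsSubgraph H K) (hKG : IsSubgraph K G) :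
    IsSubgraph H G := by
  refine ⟨hHK.1.trans hKG.1, hHK.2.1.trans hKG.2.1, fun e he => ?_⟩
  obtain ⟨hfst, hsnd⟩ := hKG.2.2 e (hHK.2.1 he)
  exact ⟨(hHK.2.2 e he).1.trans hfst, (hHK.2.2 e he).2.trans hsnd⟩

lemma Sparse.of_lift {k l : ℕ} {G G' : Multigraph α β} (hG : Sparse k l G)
    (hlift : ∀ H, IsSubgraph H G' → 1 ≤ H.edges.card → ∃ K, IsSubgraph K G ∧
      1 ≤ K.edges.card ∧ (H.edges.card : ℤ) - k * H.verts.card ≤ K.edges.card - k * K.verts.card) :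
    Sparse k l G' := by
  intro H hH hcard
  obtain ⟨K, hK, hKcard, hle⟩ := hlift H hH hcard
  linarith [hG K hK hKcard]

section Operations

variable [DecidableEq α]

lemma Multigraph.deleteVertex_isSubgraph (G : Multigraph α β) (v : α) :
    IsSubgraph (G.deleteVertex v) G :=
  ⟨Finset.erase_subset _ _, Finset.filter_subset _ _, fun _ _ => ⟨rfl, rfl⟩⟩

lemma Multigraph.deleteVertex_edges_eq_sdiff [DecidableEq β] (G : Multigraph α β) {v : α}
    {S : Finset β} (hS : S ⊆ G.edges) (hSv : ∀ e ∈ S, G.fst e = v ∨ G.snd e = v)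
    (hdeg : G.degree v ≤ S.card) :
    (G.deleteVertex v).edges = G.edges \ S := by
  set inc : β → ℕ := fun e => (if G.fst e = v then 1 else 0) + (if G.snd e = v then 1 else 0)
  have hinc_pos : ∀ e ∈ S, 1 ≤ inc e := by
    intro e he
    rcases hSv e he with h | h <;> simp [inc, h]
  have hrest : ∑ e ∈ G.edges \ S, inc e = 0 := by
    have hsplit : ∑ e ∈ G.edges \ S, inc e + ∑ e ∈ S, inc e = G.degree v :=
      Finset.sum_sdiff hS
    have hcard : S.card ≤ ∑ e ∈ S, inc e := by simpa using S.card_nsmul_le_sum inc 1 hinc_pos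
    omega
  ext e
  simp only [Multigraph.deleteVertex, Finset.mem_filter, Finset.mem_sdiff]
  constructor
  · rintro ⟨he, hfst, hsnd⟩
    refine ⟨he, fun heS => ?_⟩
    rcases hSv e heS with h | h
    exacts [hfst h, hsnd h]
  · rintro ⟨he, heS⟩
    have h0 := (Finset.sum_eq_zero_iff.mp hrest) e (Finset.mem_sdiff.mpr ⟨he, heS⟩)
    refine ⟨he, fun h => ?_, fun h => ?_⟩ <;> simp [inc, h] at h0

variable [DecidableEq β]

@[simp] lemma Multigraph.addEdge_edges (G : Multigraph α β) (f : β) (u v : α) :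
    (G.addEdge f u v).edges = insert f G.edges := rfl

@[simp] lemma Multigraph.addEdge_fst_self (G : Multigraph α β) (f : β) (u v : α) :
    (G.addEdge f u v).fst f = u := Function.update_self _ _ _

@[simp] lemma Multigraph.addEdge_snd_self (G : Multigraph α β) (f : β) (u v : α) :
    (G.addEdge f u v).snd f = v := Function.update_self _ _ _

lemma Multigraph.addEdge_fst_of_ne (G : Multigraph α β) {f e : β} (u v : α) (h : e ≠ f) :
    (G.addEdge f u v).fst e = G.fst e := Function.update_of_ne h _ _

lemma Multigraph.addEdge_snd_of_ne (G : Multigraph α β) {f e : β} (u v : α) (h : e ≠ f) :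
    (G.addEdge f u v).snd e = G.snd e := Function.update_of_ne h _ _

lemma Multigraph.addEdge_verts_of_mem (G : Multigraph α β) (f : β) {u v : α}
    (hu : u ∈ G.verts) (hv : v ∈ G.verts) : (G.addEdge f u v).verts = G.verts := by
  simp only [Multigraph.addEdge, Finset.insert_eq_of_mem hv, Finset.insert_eq_of_mem hu]

lemma IsSubgraph.of_addEdge {H G : Multigraph α β} {f : β} {u v : α} (hu : u ∈ G.verts)
    (hv : v ∈ G.verts) (hH : IsSubgraph H (G.addEdge f u v)) (hf : f ∉ H.edges) :
    IsSubgraph H G := by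
  obtain ⟨hV, hE, hends⟩ := hH
  refine ⟨G.addEdge_verts_of_mem f hu hv ▸ hV, fun e he => ?_, fun e he => ?_⟩
  · have hef : e ≠ f := ne_of_mem_of_not_mem he hf
    exact Finset.mem_of_mem_insert_of_ne (hE he) hef
  · have hef : e ≠ f := ne_of_mem_of_not_mem he hf
    rw [← G.addEdge_fst_of_ne u v hef, ← G.addEdge_snd_of_ne u v hef]
    exact hends e he

end Operations

section Walks

variable {H : Multigraph α β} {m m' : β → PM}

lemma walkGain_cons (m : β → PM) (s : β × Bool) (L : List (β × Bool)) :
    walkGain m (s :: L) = (if s.2 then m s.1 else (m s.1)⁻¹) * walkGain m L := by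
  simp [walkGain]

lemma IsWalk.mem_edges :
    ∀ {u v : α} {L : List (β × Bool)}, IsWalk H u v L → ∀ s ∈ L, s.1 ∈ H.edges
  | _, _, [], _, _, hs => absurd hs List.not_mem_nil
  | _, _, _ :: _, ⟨he, _, hL⟩, _, hs => by
    rcases List.mem_cons.mp hs with rfl | hs
    exacts [he, hL.mem_edges _ hs]

lemma IsWalk.walkGain_congr (h : ∀ e ∈ H.edges, m e = m' e) {u v : α} {L : List (β × Bool)}
    (hL : IsWalk H u v L) : walkGain m L = walkGain m' L := by
  unfold walkGain
  congr 1
  exact List.map_congr_left fun s hs => by rw [h s.1 (hL.mem_edges s hs)]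

lemma purelyPeriodic_congr (h : ∀ e ∈ H.edges, m e = m' e) :
    PurelyPeriodic H m ↔ PurelyPeriodic H m' :=
  forall₃_congr fun _ _ hL => by rw [hL.walkGain_congr h]

lemma balanced_congr (h : ∀ e ∈ H.edges, m e = m' e) : Balanced H m ↔ Balanced H m' :=
  forall₃_congr fun _ _ hL => by rw [hL.walkGain_congr h]

lemma Balanced.purelyPeriodic (h : Balanced H m) : PurelyPeriodic H m :=
  fun u L hL => by rw [h u L hL, PM.r_one]

lemma not_purelyPeriodic_of_loop {e : β} (he : e ∈ H.edges) (hloop : H.fst e = H.snd e)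
    (hr : (m e).r = true) : ¬ PurelyPeriodic H m := by
  intro hpp
  have hwalk : IsWalk H (H.fst e) (H.fst e) [(e, true)] := ⟨he, rfl, hloop.symm⟩
  simpa [walkGain, hr] using hpp _ _ hwalk

lemma IsWalk.walkGain_r_eq_xor (side : α → Bool)
    (hside : ∀ e ∈ H.edges, (m e).r = xor (side (H.fst e)) (side (H.snd e))) :
    ∀ {u v : α} {L : List (β × Bool)}, IsWalk H u v L → (walkGain m L).r = xor (side u) (side v)
  | _, _, [], hL => by rw [hL]; simp [walkGain]
  | _, _, (e, dir) :: _, ⟨he, hhead, hL⟩ => by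
    rw [walkGain_cons, PM.r_mul, hL.walkGain_r_eq_xor side hside, ← hhead]
    cases dir
    · simp only [stepHead, stepTail, Bool.false_eq_true, if_false, PM.r_inv, hside e he]
      cases side (H.fst e) <;> cases side (H.snd e) <;> simp
    · simp [stepHead, stepTail, hside e he]

lemma purelyPeriodic_of_r_eq_xor (side : α → Bool)
    (hside : ∀ e ∈ H.edges, (m e).r = xor (side (H.fst e)) (side (H.snd e))) :
    PurelyPeriodic H m :=
  fun u _ hL => by rw [hL.walkGain_r_eq_xor side hside, Bool.xor_self]

end Walks

def Multigraph.IsParallelSet (G : Multigraph α β) (S : Finset β) (u v : α) : Prop :=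
  ∀ e ∈ S, e ∈ G.edges ∧ G.fst e = u ∧ G.snd e = v

lemma PMTight.exists_r_ne {G : Multigraph α β} {m : β → PM} (hT : PMTight G m) {S : Finset β}
    {v₀ v₁ : α} (hS : G.IsParallelSet S v₀ v₁) (hv : v₁ ≠ v₀) (hcard : 2 < S.card) :
    ∃ e ∈ S, ∃ e' ∈ S, (m e).r ≠ (m e').r := by
  classical
  by_contra! hsame
  obtain ⟨f, hf⟩ := Finset.card_pos.mp (by omega : 0 < S.card)
  obtain ⟨hfG, hf₀, hf₁⟩ := hS f hf
  let K : Multigraph α β :=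
    ⟨{v₀, v₁}, S, G.fst, G.snd, fun e he => by simp [(hS e he).2.1],
      fun e he => by simp [(hS e he).2.2]⟩
  have hK : IsSubgraph K G := by
    refine ⟨?_, fun e he => (hS e he).1, fun _ _ => ⟨rfl, rfl⟩⟩
    rw [Finset.insert_subset_iff, Finset.singleton_subset_iff, ← hf₀, ← hf₁]
    exact ⟨G.fst_mem f hfG, G.snd_mem f hfG⟩
  have hpp : PurelyPeriodic K m := by
    refine purelyPeriodic_of_r_eq_xor (fun w => (m f).r && decide (w = v₁)) fun e he => ?_
    simp [K, (hS e he).2.1, (hS e he).2.2, hv.symm, hsame e he f hf]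
  have hsparse := hT.2.1 K hK hpp K (IsSubgraph.refl K) (show 1 ≤ S.card by omega)
  have hKverts : K.verts.card = 2 := Finset.card_pair hv.symm
  change (S.card : ℤ) ≤ 2 * K.verts.card - 2 at hsparse
  omega

section Reduction

variable [DecidableEq α] [DecidableEq β]

lemma IsSubgraph.exists_lift_of_loop_mem {G H : Multigraph α β} {v₀ v₁ : α} {S : Finset β}
    {f : β} (hS : G.IsParallelSet S v₀ v₁) (hv : v₁ ≠ v₀) (hf : f ∈ S)
    (hE : (G.deleteVertex v₀).edges = G.edges \ S)
    (hH : IsSubgraph H ((G.deleteVertex v₀).addEdge f v₁ v₁)) (hfH : f ∈ H.edges) :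
    ∃ K, IsSubgraph K G ∧ K.edges.card + 1 = H.edges.card + S.card ∧
      K.verts.card = H.verts.card + 1 := by
  obtain ⟨hfG, hf₀, hf₁⟩ := hS f hf
  have hv₁ : v₁ ∈ (G.deleteVertex v₀).verts := Finset.mem_erase.2 ⟨hv, hf₁ ▸ G.snd_mem f hfG⟩
  have hHV : H.verts ⊆ G.verts.erase v₀ := by
    have := hH.1
    rwa [Multigraph.addEdge_verts_of_mem _ f hv₁ hv₁] at this
  have hHE : H.edges ⊆ insert f (G.edges \ S) := hE ▸ hH.2.1
  have hv₁H : v₁ ∈ H.verts := by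
    simpa [(hH.2.2 f hfH).1] using H.fst_mem f hfH
  have hv₀H : v₀ ∉ H.verts := fun h => (Finset.mem_erase.1 (hHV h)).1 rfl
  have hinter : H.edges ∩ S = {f} := by
    ext e
    simp only [Finset.mem_inter, Finset.mem_singleton]
    refine ⟨fun ⟨heH, heS⟩ => ?_, fun he => he ▸ ⟨hfH, hf⟩⟩
    rcases Finset.mem_insert.1 (hHE heH) with he | he
    exacts [he, absurd heS (Finset.mem_sdiff.1 he).2]
  have hends : ∀ e ∈ H.edges ∪ S,
      G.fst e ∈ insert v₀ H.verts ∧ G.snd e ∈ insert v₀ H.verts := by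
    intro e he
    by_cases heS : e ∈ S
    · rw [(hS e heS).2.1, (hS e heS).2.2]
      exact ⟨Finset.mem_insert_self _ _, Finset.mem_insert_of_mem hv₁H⟩
    · have heH : e ∈ H.edges := (Finset.mem_union.1 he).resolve_right heS
      have hef : e ≠ f := fun h => heS (h ▸ hf)
      obtain ⟨hfst, hsnd⟩ := hH.2.2 e heH
      rw [Multigraph.addEdge_fst_of_ne _ _ _ hef] at hfst
      rw [Multigraph.addEdge_snd_of_ne _ _ _ hef] at hsnd
      exact ⟨Finset.mem_insert_of_mem (hfst ▸ H.fst_mem e heH),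
        Finset.mem_insert_of_mem (hsnd ▸ H.snd_mem e heH)⟩
  refine ⟨⟨insert v₀ H.verts, H.edges ∪ S, G.fst, G.snd, fun e he => (hends e he).1,
    fun e he => (hends e he).2⟩, ⟨?_, ?_, fun _ _ => ⟨rfl, rfl⟩⟩, ?_, ?_⟩
  · exact Finset.insert_subset (hf₀ ▸ G.fst_mem f hfG) (hHV.trans (Finset.erase_subset _ _))
  · exact Finset.union_subset (hHE.trans (Finset.insert_subset hfG Finset.sdiff_subset))
      fun e he => (hS e he).1
  · show (H.edges ∪ S).card + 1 = _
    rw [← Finset.card_singleton f, ← hinter, Finset.card_union_add_card_inter]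
  · exact Finset.card_insert_of_notMem hv₀H

theorem PMTight.addEdge_deleteVertex {G : Multigraph α β} {m : β → PM} (hT : PMTight G m)
    {v₀ v₁ : α} (hv : v₁ ≠ v₀) {S : Finset β} (hS : G.IsParallelSet S v₀ v₁)
    (hcard : S.card = 3) (hdeg : G.degree v₀ = 3) {f : β} (hf : f ∈ S) {g : PM}
    (hg : g.r = true) :
    PMTight ((G.deleteVertex v₀).addEdge f v₁ v₁) (Function.update m f g) := by
  obtain ⟨⟨hsparse, hcount⟩, hPP, hBal⟩ := hT
  obtain ⟨hfG, hf₀, hf₁⟩ := hS f hf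
  set G' := (G.deleteVertex v₀).addEdge f v₁ v₁
  have hE : (G.deleteVertex v₀).edges = G.edges \ S :=
    G.deleteVertex_edges_eq_sdiff (fun e he => (hS e he).1) (fun e he => .inl (hS e he).2.1)
      (by omega)
  have hv₁ : v₁ ∈ (G.deleteVertex v₀).verts := Finset.mem_erase.2 ⟨hv, hf₁ ▸ G.snd_mem f hfG⟩
  have hsub : ∀ H, IsSubgraph H G' → f ∉ H.edges → IsSubgraph H G := fun H hH hfH =>
    (hH.of_addEdge hv₁ hv₁ hfH).trans (G.deleteVertex_isSubgraph v₀)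
  have hgain : ∀ H : Multigraph α β, f ∉ H.edges → ∀ e ∈ H.edges, m e = Function.update m f g e :=
    fun H hfH e he => (Function.update_of_ne (ne_of_mem_of_not_mem he hfH) _ _).symm
  have hloop : ∀ H, IsSubgraph H G' → PurelyPeriodic H (Function.update m f g) → f ∉ H.edges :=
    fun H hH hpp hfH => not_purelyPeriodic_of_loop hfH
      (by rw [(hH.2.2 f hfH).1, (hH.2.2 f hfH).2]; simp [G']) (by simpa using hg) hpp
  refine ⟨⟨hsparse.of_lift fun H hH hH1 => ?_, ?_⟩, fun H hH hpp => ?_, fun H hH hbal => ?_⟩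
  · by_cases hfH : f ∈ H.edges
    · obtain ⟨K, hK, hKE, hKV⟩ := hH.exists_lift_of_loop_mem hS hv hf hE hfH
      exact ⟨K, hK, by omega, by push_cast; omega⟩
    · exact ⟨H, hsub H hH hfH, hH1, le_rfl⟩
  · have hE' : G'.edges.card + 2 = G.edges.card := by
      have := Finset.card_le_card fun e he => (hS e he).1
      rw [Multigraph.addEdge_edges, hE, Finset.card_insert_of_notMem (by simp [hf]),
        Finset.card_sdiff_of_subset fun e he => (hS e he).1]
      omega
    have hV' : G'.verts.card + 1 = G.verts.card := by
      rw [Multigraph.addEdge_verts_of_mem _ f hv₁ hv₁]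
      exact Finset.card_erase_add_one (hf₀ ▸ G.fst_mem f hfG)
    omega
  · have hfH := hloop H hH hpp
    exact hPP H (hsub H hH hfH) ((purelyPeriodic_congr (hgain H hfH)).2 hpp)
  · have hfH := hloop H hH hbal.purelyPeriodic
    exact hBal H (hsub H hH hfH) ((balanced_congr (hgain H hfH)).2 hbal)

end Reduction

theorem tripleParallel_reduction_general {α β : Type} [DecidableEq α] [DecidableEq β]
    (G : Multigraph α β) (m : β → PM) (hT : PMTight G m)
    (v₀ v₁ : α) (hv01 : v₁ ≠ v₀) (hdeg : G.degree v₀ = 3)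
    (e₁ e₂ e₃ : β) (h12 : e₁ ≠ e₂) (h13 : e₁ ≠ e₃) (h23 : e₂ ≠ e₃)
    (he₁ : e₁ ∈ G.edges) (he₂ : e₂ ∈ G.edges) (he₃ : e₃ ∈ G.edges)
    (hf₁ : G.fst e₁ = v₀) (hs₁ : G.snd e₁ = v₁)
    (hf₂ : G.fst e₂ = v₀) (hs₂ : G.snd e₂ = v₁)
    (hf₃ : G.fst e₃ = v₀) (hs₃ : G.snd e₃ = v₁) :
    ∃ i j : Fin 3, i ≠ j ∧
      PMTight ((G.deleteVertex v₀).addEdge e₁ v₁ v₁)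
        (Function.update m e₁ ((m (![e₁, e₂, e₃] i))⁻¹ * m (![e₁, e₂, e₃] j))) := by
  set S : Finset β := {e₁, e₂, e₃}
  have hS : G.IsParallelSet S v₀ v₁ := by
    simp only [Multigraph.IsParallelSet, S, Finset.mem_insert, Finset.mem_singleton,
      forall_eq_or_imp, forall_eq]
    exact ⟨⟨he₁, hf₁, hs₁⟩, ⟨he₂, hf₂, hs₂⟩, ⟨he₃, hf₃, hs₃⟩⟩
  have hcard : S.card = 3 := Finset.card_eq_three.2 ⟨e₁, e₂, e₃, h12, h13, h23, rfl⟩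
  have hindex : ∀ e ∈ S, ∃ i, ![e₁, e₂, e₃] i = e := by
    simp [S, Fin.exists_fin_succ]
  obtain ⟨e, he, e', he', hr⟩ := hT.exists_r_ne hS hv01 (by omega)
  obtain ⟨i, rfl⟩ := hindex e he
  obtain ⟨j, rfl⟩ := hindex e' he'
  refine ⟨i, j, fun hij => hr (hij ▸ rfl), hT.addEdge_deleteVertex hv01 hS hcard hdeg
    (by simp [S]) ?_⟩
  simpa using hr

/-- A degree-3 vertex with a triple of parallel incident edges
admits a gained 1-reduction preserving `ℤ²⋊𝒞ₛ`-tightness. -/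
theorem tripleParallel_reduction {α β : Type} [DecidableEq α] [DecidableEq β]
    (G : Multigraph α β) (m : β → PM) (hGm : IsGainGraph G m) (hT : PMTight G m)
    (v₀ v₁ : α) (hv01 : v₁ ≠ v₀) (hv₀ : v₀ ∈ G.verts) (hdeg : G.degree v₀ = 3)
    (e₁ e₂ e₃ : β) (h12 : e₁ ≠ e₂) (h13 : e₁ ≠ e₃) (h23 : e₂ ≠ e₃)
    (he₁ : e₁ ∈ G.edges) (he₂ : e₂ ∈ G.edges) (he₃ : e₃ ∈ G.edges)
    (hf₁ : G.fst e₁ = v₀) (hs₁ : G.snd e₁ = v₁)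
    (hf₂ : G.fst e₂ = v₀) (hs₂ : G.snd e₂ = v₁)
    (hf₃ : G.fst e₃ = v₀) (hs₃ : G.snd e₃ = v₁) :
    ∃ i j : Fin 3, i ≠ j ∧
      PMTight ((G.deleteVertex v₀).addEdge e₁ v₁ v₁)
        (Function.update m e₁ ((m (![e₁, e₂, e₃] i))⁻¹ * m (![e₁, e₂, e₃] j))) :=
  tripleParallel_reduction_general G m hT v₀ v₁ hv01 hdeg e₁ e₂ e₃ h12 h13 h23 he₁ he₂ he₃ hf₁ hs₁
    hf₂ hs₂ hf₃ hs₃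

end Crystal
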